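/- For differentiable u, v : ℝ³ × (ℝ \ {0}) → ℝ (coordinates (x₁,x₂,x₃,t), t ≠ 0), define {u,v} = (2x₂/t)(∂₁u·∂₂v − ∂₂u·∂₁v) + (2x₃/t)(∂₁u·∂₃v − ∂₃u·∂₁v) + (∂_t u·∂₁v − ∂₁u·∂_t v). Then C₂(x,t) := t²·x₂ and C₃(x,t) := t²·x₃ satisfy {C₂, g} = 0 and {C₃, g} = 0 at every point with t ≠ 0, for every differentiable g. -/

import Mathlib

/-- Partial derivative in the first coordinate of `ℝ⁴`. -/
noncomputable def pd1 (u : ℝ × ℝ × ℝ × ℝ → ℝ) (P : ℝ × ℝ × ℝ × ℝ) : ℝ :=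
  deriv (fun s => u (s, P.2.1, P.2.2.1, P.2.2.2)) P.1

/-- Partial derivative in the second coordinate of `ℝ⁴`. -/
noncomputable def pd2 (u : ℝ × ℝ × ℝ × ℝ → ℝ) (P : ℝ × ℝ × ℝ × ℝ) : ℝ :=
  deriv (fun s => u (P.1, s, P.2.2.1, P.2.2.2)) P.2.1

/-- Partial derivative in the third coordinate of `ℝ⁴`. -/
noncomputable def pd3 (u : ℝ × ℝ × ℝ × ℝ → ℝ) (P : ℝ × ℝ × ℝ × ℝ) : ℝ :=
  deriv (fun s => u (P.1, P.2.1, s, P.2.2.2)) P.2.2.1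

/-- Partial derivative in the fourth coordinate of `ℝ⁴`. -/
noncomputable def pdt (u : ℝ × ℝ × ℝ × ℝ → ℝ) (P : ℝ × ℝ × ℝ × ℝ) : ℝ :=
  deriv (fun s => u (P.1, P.2.1, P.2.2.1, s)) P.2.2.2

/-- The Poissonization of the 3D linear Jacobi structure
`Λ = 2x₂ ∂₁ ∧ ∂₂ + 2x₃ ∂₁ ∧ ∂₃`, `E = ∂₁` on coordinates `(x₁,x₂,x₃,t)`. -/
noncomputable def br3 (u v : ℝ × ℝ × ℝ × ℝ → ℝ) (P : ℝ × ℝ × ℝ × ℝ) : ℝ :=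
  (2 * P.2.1 / P.2.2.2) * (pd1 u P * pd2 v P - pd2 u P * pd1 v P)
  + (2 * P.2.2.1 / P.2.2.2) * (pd1 u P * pd3 v P - pd3 u P * pd1 v P)
  + (pdt u P * pd1 v P - pd1 u P * pdt v P)

/-- `C₂(x,t) = t²·x₂`. -/
def casimirC2 (P : ℝ × ℝ × ℝ × ℝ) : ℝ := P.2.2.2 ^ 2 * P.2.1

/-- `C₃(x,t) = t²·x₃`. -/
def casimirC3 (P : ℝ × ℝ × ℝ × ℝ) : ℝ := P.2.2.2 ^ 2 * P.2.2.1

/-- `t²x₂` and `t²x₃` are Casimirs of the Poissonized 3D linear Jacobi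
structure. -/
theorem stmt_11 (g : ℝ × ℝ × ℝ × ℝ → ℝ)
    (hg : ∀ P : ℝ × ℝ × ℝ × ℝ, P.2.2.2 ≠ 0 → DifferentiableAt ℝ g P) :
    ∀ x₁ x₂ x₃ t : ℝ, t ≠ 0 →
      br3 casimirC2 g (x₁, x₂, x₃, t) = 0 ∧ br3 casimirC3 g (x₁, x₂, x₃, t) = 0 := by
  intro x₁ x₂ x₃ t ht
  have h1 : pd1 casimirC2 (x₁, x₂, x₃, t) = 0 := by
    simp [pd1, casimirC2]
  have h2 : pd2 casimirC2 (x₁, x₂, x₃, t) = t ^ 2 := by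
    rw [pd2]; simp only [casimirC2]; rw [deriv_const_mul _ differentiableAt_fun_id]; simp
  have h3 : pd3 casimirC2 (x₁, x₂, x₃, t) = 0 := by
    simp [pd3, casimirC2]
  have h4 : pdt casimirC2 (x₁, x₂, x₃, t) = 2 * t * x₂ := by
    simp [pdt, casimirC2]
  have k1 : pd1 casimirC3 (x₁, x₂, x₃, t) = 0 := by
    simp [pd1, casimirC3]
  have k2 : pd2 casimirC3 (x₁, x₂, x₃, t) = 0 := by
    simp [pd2, casimirC3]
  have k3 : pd3 casimirC3 (x₁, x₂, x₃, t) = t ^ 2 := by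
    rw [pd3]; simp only [casimirC3]; rw [deriv_const_mul _ differentiableAt_fun_id]; simp
  have k4 : pdt casimirC3 (x₁, x₂, x₃, t) = 2 * t * x₃ := by
    simp [pdt, casimirC3]
  constructor
  · simp only [br3, h1, h2, h3, h4]
    field_simp
    ring
  · simp only [br3, k1, k2, k3, k4]
    field_simp
    ring
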